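/- arXiv:1601.02208 — 5 statements merged into one kernel-verified Lean document; each statement's English description precedes it below -/
import Mathlib

section
/- For every index j ∈ {1,...,n}, the family of vectors {P_{i_1,...,i_k} : {i_1,...,i_k} is a k-element subset of {1,...,n} not containing j} is a basis of V. -/
noncomputable section

/-- The determinant `d_{l 1, …, l k}` of the `k × k` matrix whose `m`-th column consists of
`b (l m) 1, …, b (l m) k`. -/
def dd {n k : ℕ} (b : Fin n → Fin k → ℂ) (l : Fin k → Fin n) : ℂ :=
  Matrix.det (Matrix.of fun j m => b (l m) j)

/-- Fix integers `n > k ≥ 1` (here `k = k' + 1`) and complex numbers `b_i^j` such that all the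
determinants `d_{i_1,…,i_k}` with distinct indices are nonzero.  Let `V` be a complex vector
space of dimension `(n-1).choose k` and let `P_s ∈ V` be nonzero vectors, one for each
`k`-element subset `s ⊆ {1,…,n}`, which span `V` and satisfy the relations
`∑_j d_{j,i_2,…,i_k} P_{{j,i_2,…,i_k}} = 0` for all distinct `i_2,…,i_k`.
Then for every index `j`, the family of the vectors `P_s` over the `k`-element subsets `s`
not containing `j` is a basis of `V`, i.e. it is linearly independent and spans `V`. -/
theorem stmt0 (n k' : ℕ) (hnk : k' + 1 < n) (b : Fin n → Fin (k' + 1) → ℂ)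
    (hd : ∀ l : Fin (k' + 1) → Fin n, Function.Injective l → dd b l ≠ 0)
    (V : Type*) [AddCommGroup V] [Module ℂ V] [FiniteDimensional ℂ V]
    (hdim : Module.finrank ℂ V = (n - 1).choose (k' + 1))
    (P : Finset (Fin n) → V)
    (hP0 : ∀ s : Finset (Fin n), s.card = k' + 1 → P s ≠ 0)
    (hspan : Submodule.span ℂ (P '' {s : Finset (Fin n) | s.card = k' + 1}) = ⊤)
    (hrel : ∀ I : Fin k' → Fin n, Function.Injective I →
      ∑ j : Fin n, dd b (Fin.cons j I) • P (insert j (Finset.image I Finset.univ)) = 0) :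
    ∀ j : Fin n,
      LinearIndependent ℂ
        (fun s : {s : Finset (Fin n) // s.card = k' + 1 ∧ j ∉ s} => P s.1) ∧
      Submodule.span ℂ
        (Set.range fun s : {s : Finset (Fin n) // s.card = k' + 1 ∧ j ∉ s} => P s.1) = ⊤ := by
  intro j
  classical
  set S := Submodule.span ℂ
      (Set.range fun s : {s : Finset (Fin n) // s.card = k' + 1 ∧ j ∉ s} => P s.1) with hS
  have hcard : Fintype.card {s : Finset (Fin n) // s.card = k' + 1 ∧ j ∉ s}
      = (n - 1).choose (k' + 1) := by
    rw [Fintype.card_subtype]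
    have : (Finset.univ.filter fun s : Finset (Fin n) => s.card = k' + 1 ∧ j ∉ s)
        = Finset.powersetCard (k' + 1) (Finset.univ.erase j) := by
      ext s
      simp only [Finset.mem_filter, Finset.mem_univ, true_and, Finset.mem_powersetCard,
        Finset.subset_erase, Finset.subset_univ, true_and]
      tauto
    rw [this, Finset.card_powersetCard, Finset.card_erase_of_mem (Finset.mem_univ j),
      Finset.card_univ, Fintype.card_fin]
  have htop : (⊤ : Submodule ℂ V) ≤ S := by
    rw [← hspan]
    rw [Submodule.span_le]
    rintro _ ⟨s, hs, rfl⟩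
    simp only [Set.mem_setOf_eq] at hs
    by_cases hjs : j ∈ s
    · -- use the relation with I enumerating s.erase j
      have he : (s.erase j).card = k' := by
        rw [Finset.card_erase_of_mem hjs, hs]; omega
      set I : Fin k' → Fin n := fun m => ((s.erase j).orderIsoOfFin he m : Fin n) with hI
      have hIinj : Function.Injective I :=
        Subtype.val_injective.comp (((s.erase j).orderIsoOfFin he).injective)
      have hImem : ∀ m, I m ∈ s.erase j := fun m => ((s.erase j).orderIsoOfFin he m).2
      have hIimg : Finset.image I Finset.univ = s.erase j := by
        ext x
        simp only [Finset.mem_image, Finset.mem_univ, true_and]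
        constructor
        · rintro ⟨m, rfl⟩; exact hImem m
        · intro hx
          exact ⟨((s.erase j).orderIsoOfFin he).symm ⟨x, hx⟩,
            congrArg Subtype.val (((s.erase j).orderIsoOfFin he).apply_symm_apply ⟨x, hx⟩)⟩
      have hjI : j ∉ Set.range I := by
        rintro ⟨m, hm⟩
        exact (Finset.ne_of_mem_erase (hImem m)) hm
      have hrel' := hrel I hIinj
      rw [hIimg] at hrel'
      have hsplit : dd b (Fin.cons j I) • P (insert j (s.erase j))
          + ∑ m ∈ Finset.univ.erase j, dd b (Fin.cons m I) • P (insert m (s.erase j)) = 0 :=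
        (Finset.add_sum_erase Finset.univ
          (fun m => dd b (Fin.cons m I) • P (insert m (s.erase j))) (Finset.mem_univ j)).trans hrel'
      have hins : insert j (s.erase j) = s := Finset.insert_erase hjs
      rw [hins] at hsplit
      have hd0 : dd b (Fin.cons j I) ≠ 0 :=
        hd _ (Fin.cons_injective_iff.mpr ⟨hjI, hIinj⟩)
      have hsumS : ∑ m ∈ Finset.univ.erase j, dd b (Fin.cons m I) • P (insert m (s.erase j)) ∈ S := by
        apply Submodule.sum_mem
        intro m hm
        have hmj : m ≠ j := Finset.ne_of_mem_erase hm
        by_cases hme : m ∈ s.erase j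
        · -- coefficient is zero
          obtain ⟨m', hm'⟩ : ∃ m', I m' = m := by
            have := hIimg ▸ hme
            simpa [Finset.mem_image] using (hIimg.symm ▸ hme : m ∈ Finset.image I Finset.univ)
          have : dd b (Fin.cons m I) = 0 := by
            apply Matrix.det_zero_of_column_eq (i := (0 : Fin (k' + 1))) (j := m'.succ)
            · exact (Fin.succ_ne_zero m').symm
            · intro k
              simp [Fin.cons_zero, Fin.cons_succ, hm']
          rw [this, zero_smul]
          exact Submodule.zero_mem S
        · apply Submodule.smul_mem
          have hcardt : (insert m (s.erase j)).card = k' + 1 := by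
            rw [Finset.card_insert_of_notMem hme, he]
          have hjt : j ∉ insert m (s.erase j) := by
            simp only [Finset.mem_insert]
            rintro (h | h)
            · exact hmj h.symm
            · exact Finset.notMem_erase j s h
          exact Submodule.subset_span ⟨⟨_, hcardt, hjt⟩, rfl⟩
      have : P s = (dd b (Fin.cons j I))⁻¹ •
          (-(∑ m ∈ Finset.univ.erase j, dd b (Fin.cons m I) • P (insert m (s.erase j)))) := by
        rw [← eq_neg_of_add_eq_zero_left hsplit, smul_smul, inv_mul_cancel₀ hd0, one_smul]
      rw [this]
      exact Submodule.smul_mem _ _ (Submodule.neg_mem _ hsumS)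
    · exact Submodule.subset_span ⟨⟨s, hs, hjs⟩, rfl⟩
  refine ⟨?_, le_antisymm le_top htop⟩
  exact linearIndependent_of_top_le_span_of_card_eq_finrank htop (by rw [hcard, hdim])
end
end

section
/- For all distinct indices i_1,...,i_k, the vector T_{i_1}∘⋯∘T_{i_{k-1}}(p_{i_k}) ∈ V is invariant under all permutations of (i_1,...,i_k); denoting this common value by P_{i_1,...,i_k}, one has for any two k-tuples of distinct indices (i_1,...,i_k) and (j_1,...,j_k): T_{i_1}∘⋯∘T_{i_k}(P_{j_1,...,j_k}) = T_{j_1}∘⋯∘T_{j_k}(P_{i_1,...,i_k}). In particular the multiplication defined on these vectors by P_{i_1,...,i_k} * v := T_{i_1}∘⋯∘T_{i_k}(v) is commutative. -/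
noncomputable section

/-- The composition `T_{I 1} ∘ T_{I 2} ∘ ⋯ ∘ T_{I m}` of the operators along a tuple of
indices. -/
def compT {V : Type*} [AddCommGroup V] [Module ℂ V] {n m : ℕ}
    (T : Fin n → Module.End ℂ V) (I : Fin m → Fin n) : Module.End ℂ V :=
  (List.ofFn fun j => T (I j)).prod

/-- The vector `T_{i_1} ∘ ⋯ ∘ T_{i_{k-1}} (p_{i_k})` attached to a `k`-tuple of indices
(here `k = k' + 1`). -/
def PP {V : Type*} [AddCommGroup V] [Module ℂ V] {n k' : ℕ}
    (T : Fin n → Module.End ℂ V) (p : Fin n → V) (I : Fin (k' + 1) → Fin n) : V :=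
  compT T (Fin.init I) (p (I (Fin.last k')))

/-!
Write `g(l, a) := (∏_{i ∈ l} T_i) p_a` for a list of indices `l`. Since the `T_i` commute, `g(l, a)`
only depends on `l` up to permutation, and `T_i p_j = T_j p_i` lets the index `a` trade places
with any entry of `l`; hence `g(l, a)` only depends on the multiset `a :: l`. Both claims are
instances of this: `P_I = g(I_{<k}, I_k)` has multiset `I`, and `T_I P_J = g(I ++ J_{<k}, J_k)`
has multiset `I + J`, which is symmetric in `I` and `J`.
-/

section CommutingFamily

variable {ι M X : Type*} [Monoid M] [MulAction M X] {T : ι → M} {p : ι → X}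

theorem prod_map_eq_of_perm (hT : ∀ i j, Commute (T i) (T j)) {l l' : List ι}
    (h : l.Perm l') : (l.map T).prod = (l'.map T).prod :=
  (h.map T).prod_eq' (List.pairwise_map.mpr (List.pairwise_of_forall fun i j => hT i j))

theorem prod_map_cons_smul_comm (hT : ∀ i j, Commute (T i) (T j))
    (hp : ∀ i j, T i • p j = T j • p i) (l : List ι) (x a : ι) :
    ((x :: l).map T).prod • p a = ((a :: l).map T).prod • p x := by
  have h_cons (y : ι) : ((y :: l).map T).prod = (l.map T).prod * T y := by
    rw [prod_map_eq_of_perm hT (List.perm_append_singleton y l).symm, List.map_append,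
      List.prod_append, List.map_singleton, List.prod_singleton]
  rw [h_cons, h_cons, mul_smul, mul_smul, hp]

theorem prod_map_smul_eq_of_perm_cons (hT : ∀ i j, Commute (T i) (T j))
    (hp : ∀ i j, T i • p j = T j • p i) {l l' : List ι} {a a' : ι}
    (h : (a :: l).Perm (a' :: l')) : (l.map T).prod • p a = (l'.map T).prod • p a' := by
  classical
  by_cases ha : a = a'
  · subst ha
    rw [prod_map_eq_of_perm hT h.cons_inv]
  obtain ⟨l₀, hl₀⟩ : ∃ l₀, l.Perm (a' :: l₀) :=
    ⟨_, List.perm_cons_erase ((List.mem_cons.mp (h.symm.subset List.mem_cons_self)).resolve_left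
      (Ne.symm ha))⟩
  have hl' : (a :: l₀).Perm l' :=
    (((List.Perm.swap a a' l₀).trans (hl₀.symm.cons a)).trans h).cons_inv
  rw [prod_map_eq_of_perm hT hl₀, prod_map_cons_smul_comm hT hp, prod_map_eq_of_perm hT hl']

end CommutingFamily

theorem List.cons_ofFn_init_perm {α : Type*} {k' : ℕ} (I : Fin (k' + 1) → α) :
    (I (Fin.last k') :: List.ofFn (Fin.init I)).Perm (List.ofFn I) := by
  rw [List.ofFn_succ' I, List.concat_eq_append]
  exact (List.perm_append_singleton _ _).symm

section Tuples

variable {V : Type*} [AddCommGroup V] [Module ℂ V] {n : ℕ} {T : Fin n → Module.End ℂ V}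
  {p : Fin n → V}

theorem compT_apply {m : ℕ} (I : Fin m → Fin n) (v : V) :
    compT T I v = ((List.ofFn I).map T).prod • v := by
  rw [compT, List.map_ofFn, Module.End.smul_def]
  rfl

theorem PP_eq_prod_map_smul {k' : ℕ} (I : Fin (k' + 1) → Fin n) :
    PP T p I = ((List.ofFn (Fin.init I)).map T).prod • p (I (Fin.last k')) :=
  compT_apply _ _

end Tuples

/-- Let `V` be a complex vector space, `T_1,…,T_n` pairwise commuting endomorphisms of `V` and
`p_1,…,p_n ∈ V` vectors with `T_i p_j = T_j p_i` for all `i, j`.  Fix `k = k' + 1 ≥ 1`.  Then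
for distinct indices `i_1,…,i_k` the vector `P_{i_1,…,i_k} := T_{i_1}∘⋯∘T_{i_{k-1}}(p_{i_k})`
is invariant under all permutations of `(i_1,…,i_k)`, and for any two `k`-tuples of distinct
indices `(i_1,…,i_k)` and `(j_1,…,j_k)` one has
`T_{i_1}∘⋯∘T_{i_k}(P_{j_1,…,j_k}) = T_{j_1}∘⋯∘T_{j_k}(P_{i_1,…,i_k})`; in particular the
multiplication `P_{i_1,…,i_k} * v := T_{i_1}∘⋯∘T_{i_k}(v)` is commutative on these vectors. -/
theorem stmt2 {V : Type*} [AddCommGroup V] [Module ℂ V] (n k' : ℕ)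
    (T : Fin n → Module.End ℂ V) (hT : ∀ i j, Commute (T i) (T j))
    (p : Fin n → V) (hp : ∀ i j, T i (p j) = T j (p i)) :
    (∀ I : Fin (k' + 1) → Fin n, Function.Injective I →
      ∀ σ : Equiv.Perm (Fin (k' + 1)), PP T p (I ∘ σ) = PP T p I) ∧
    (∀ I J : Fin (k' + 1) → Fin n, Function.Injective I → Function.Injective J →
      compT T I (PP T p J) = compT T J (PP T p I)) := by
  have hp' : ∀ i j, T i • p j = T j • p i := hp
  refine ⟨fun I _ σ => ?_, fun I J _ _ => ?_⟩
  · rw [PP_eq_prod_map_smul, PP_eq_prod_map_smul]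
    exact prod_map_smul_eq_of_perm_cons hT hp' <| (List.cons_ofFn_init_perm _).trans <|
      (σ.ofFn_comp_perm I).trans (List.cons_ofFn_init_perm I).symm
  · have h_merge (I J : Fin (k' + 1) → Fin n) :
        (J (Fin.last k') :: (List.ofFn I ++ List.ofFn (Fin.init J))).Perm
          (List.ofFn I ++ List.ofFn J) :=
      List.perm_middle.symm.trans ((List.cons_ofFn_init_perm J).append_left _)
    rw [PP_eq_prod_map_smul, PP_eq_prod_map_smul, compT_apply, compT_apply, ← mul_smul,
      ← mul_smul, ← List.prod_append, ← List.prod_append, ← List.map_append, ← List.map_append]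
    exact prod_map_smul_eq_of_perm_cons hT hp' <|
      (h_merge I J).trans (List.perm_append_comm.trans (h_merge J I).symm)
end
end

section
/- For any three k-tuples of distinct indices α = (i_1,...,i_k), β = (j_1,...,j_k), γ = (l_1,...,l_k), the Frobenius property S(T_{i_1}∘⋯∘T_{i_k}(P_β), P_γ) = S(P_α, T_{j_1}∘⋯∘T_{j_k}(P_γ)) holds, where P_{m_1,...,m_k} := T_{m_1}∘⋯∘T_{m_{k-1}}(p_{m_k}). In other words, the multiplication P_α * v := T_{i_1}∘⋯∘T_{i_k}(v) satisfies S(P_α * P_β, P_γ) = S(P_α, P_β * P_γ). -/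
/-! Writing `α = (α', a)` and `β = (β', b)`, commutativity of the `T_i` gives
`T_α P_β = T_{α'} T_{β'} T_a p_b = T_{α'} T_{β'} T_b p_a = T_β P_α`, and `T_β` is symmetric
with respect to `S` as a product of commuting symmetric operators, so
`S(T_α P_β, P_γ) = S(T_β P_α, P_γ) = S(P_α, T_β P_γ)`. -/

noncomputable section

namespace compT

variable {V : Type*} [AddCommGroup V] [Module ℂ V] {n : ℕ} {T : Fin n → Module.End ℂ V}

theorem eq_mul_tail {m : ℕ} (I : Fin (m + 1) → Fin n) :
    compT T I = T (I 0) * compT T (Fin.tail I) := by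
  rw [compT, List.ofFn_succ, List.prod_cons]
  rfl

theorem eq_init_mul {m : ℕ} (I : Fin (m + 1) → Fin n) :
    compT T I = compT T (Fin.init I) * T (I (Fin.last m)) := by
  rw [compT, List.ofFn_succ', List.prod_concat]
  rfl

theorem commute_left (hT : ∀ i j, Commute (T i) (T j)) (i : Fin n) {m : ℕ}
    (I : Fin m → Fin n) : Commute (T i) (compT T I) :=
  Commute.list_prod_right _ _ fun _ hA => by
    obtain ⟨j, rfl⟩ := List.mem_ofFn.mp hA
    exact hT i (I j)

theorem commute (hT : ∀ i j, Commute (T i) (T j)) {m m' : ℕ} (I : Fin m → Fin n)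
    (J : Fin m' → Fin n) : Commute (compT T I) (compT T J) :=
  Commute.list_prod_left _ _ fun _ hA => by
    obtain ⟨i, rfl⟩ := List.mem_ofFn.mp hA
    exact commute_left hT (I i) J

theorem isAdjointPair {S : V →ₗ[ℂ] V →ₗ[ℂ] ℂ} (hT : ∀ i j, Commute (T i) (T j))
    (hTS : ∀ j, LinearMap.IsAdjointPair S S (T j) (T j)) :
    ∀ {m : ℕ} (I : Fin m → Fin n), LinearMap.IsAdjointPair S S (compT T I) (compT T I)
  | 0, _ => LinearMap.isAdjointPair_one
  | m + 1, I => by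
    have h := (hTS (I 0)).mul (isAdjointPair hT hTS (Fin.tail I))
    rwa [← (commute_left hT (I 0) (Fin.tail I)).eq, ← eq_mul_tail] at h

theorem apply_PP (hT : ∀ i j, Commute (T i) (T j)) (p : Fin n → V) {a b : ℕ}
    (α : Fin (a + 1) → Fin n) (β : Fin (b + 1) → Fin n) :
    compT T α (PP T p β) =
      compT T (Fin.init α) (compT T (Fin.init β) (T (α (Fin.last a)) (p (β (Fin.last b))))) := by
  rw [eq_init_mul α, PP, Module.End.mul_apply, ← Module.End.mul_apply (T _),
    (commute_left hT _ _).eq, Module.End.mul_apply]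

theorem apply_PP_comm (hT : ∀ i j, Commute (T i) (T j)) {p : Fin n → V}
    (hp : ∀ i j, T i (p j) = T j (p i)) {a b : ℕ}
    (α : Fin (a + 1) → Fin n) (β : Fin (b + 1) → Fin n) :
    compT T α (PP T p β) = compT T β (PP T p α) := by
  rw [apply_PP hT, apply_PP hT, hp, ← Module.End.mul_apply, (commute hT _ _).eq,
    Module.End.mul_apply]

end compT

theorem stmt3_general {V : Type*} [AddCommGroup V] [Module ℂ V] (n k' : ℕ)
    (S : V →ₗ[ℂ] V →ₗ[ℂ] ℂ)
    (T : Fin n → Module.End ℂ V) (hT : ∀ i j, Commute (T i) (T j))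
    (hTS : ∀ j u v, S (T j u) v = S u (T j v))
    (p : Fin n → V) (hp : ∀ i j, T i (p j) = T j (p i)) :
    ∀ α β γ : Fin (k' + 1) → Fin n,
      Function.Injective α → Function.Injective β → Function.Injective γ →
      S (compT T α (PP T p β)) (PP T p γ) = S (PP T p α) (compT T β (PP T p γ)) := by
  intro α β γ _ _ _
  rw [compT.apply_PP_comm hT hp α β]
  exact compT.isAdjointPair hT hTS β _ _

/-- Let `V` be a complex vector space with a symmetric bilinear form `S`, let `T_1,…,T_n` be
pairwise commuting endomorphisms of `V`, each symmetric with respect to `S`, and let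
`p_1,…,p_n ∈ V` satisfy `T_i p_j = T_j p_i`.  Fix `k = k' + 1 ≥ 1`.  Then for any three
`k`-tuples of distinct indices `α = (i_1,…,i_k)`, `β = (j_1,…,j_k)`, `γ = (l_1,…,l_k)` the
Frobenius property `S(T_{i_1}∘⋯∘T_{i_k}(P_β), P_γ) = S(P_α, T_{j_1}∘⋯∘T_{j_k}(P_γ))` holds,
i.e. the multiplication `P_α * v := T_{i_1}∘⋯∘T_{i_k}(v)` satisfies
`S(P_α * P_β, P_γ) = S(P_α, P_β * P_γ)`. -/
theorem stmt3 {V : Type*} [AddCommGroup V] [Module ℂ V] (n k' : ℕ)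
    (S : V →ₗ[ℂ] V →ₗ[ℂ] ℂ) (hS : ∀ u v, S u v = S v u)
    (T : Fin n → Module.End ℂ V) (hT : ∀ i j, Commute (T i) (T j))
    (hTS : ∀ j u v, S (T j u) v = S u (T j v))
    (p : Fin n → V) (hp : ∀ i j, T i (p j) = T j (p i)) :
    ∀ α β γ : Fin (k' + 1) → Fin n,
      Function.Injective α → Function.Injective β → Function.Injective γ →
      S (compT T α (PP T p β)) (PP T p γ) = S (PP T p α) (compT T β (PP T p γ)) :=
  stmt3_general n k' S T hT hTS p hp
end
end

section
/- For any distinct indices i_2,...,i_k ∈ {1,...,n}, one has ∑_{j=1}^n d_{j,i_2,...,i_k} p_j(z) = 0 in the algebra A_z. In fact, in the field of rational functions ℂ(t_1,...,t_k) the identity ∑_{j=1}^n d_{j,i_2,...,i_k} · a_j/f_j(t,z) = ∑_{m=1}^k (-1)^{m+1} M_m · (∑_{i=1}^n a_i b_i^m/f_i(t,z)) holds, where M_m is the (k-1)×(k-1) minor of the rows i_2,...,i_k of the matrix b with the m-th column deleted. -/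
open MvPolynomial

noncomputable section

/-- `f_i(t,z) = ∑_j b_i^j t_j + z_i` as a polynomial in `t = (t_1,…,t_k)`. -/
def fpoly {n k : ℕ} (b : Fin n → Fin k → ℂ) (z : Fin n → ℂ) (i : Fin n) :
    MvPolynomial (Fin k) ℂ :=
  (∑ j, C (b i j) * X j) + C (z i)

/-- `f_{i_1,…,i_{k+1}}(z) = ∑_{l=1}^{k+1} (-1)^{l-1} d_{i_1,…,î_l,…,i_{k+1}} z_{i_l}`. -/
def fF {n k : ℕ} (b : Fin n → Fin k → ℂ) (z : Fin n → ℂ) (I : Fin (k + 1) → Fin n) : ℂ :=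
  ∑ l : Fin (k + 1), (-1) ^ (l : ℕ) * dd b (I ∘ l.succAbove) * z (I l)

/-- The discriminant `Δ ⊂ ℂⁿ`, the union over `1 ≤ i_1 < … < i_{k+1} ≤ n` of the zero sets of
the `f_{i_1,…,i_{k+1}}`. -/
def discr {n k : ℕ} (b : Fin n → Fin k → ℂ) : Set (Fin n → ℂ) :=
  {z | ∃ I : Fin (k + 1) → Fin n, StrictMono I ∧ fF b z I = 0}

/-- The multiplicative set generated by `f_1(t,z), …, f_n(t,z)`. -/
def Sz {n k : ℕ} (b : Fin n → Fin k → ℂ) (z : Fin n → ℂ) :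
    Submonoid (MvPolynomial (Fin k) ℂ) :=
  Submonoid.closure (Set.range (fpoly b z))

/-- `R_z`, the localization of `ℂ[t_1,…,t_k]` at the multiplicative set generated by the
`f_i(t,z)`. -/
abbrev Rz {n k : ℕ} (b : Fin n → Fin k → ℂ) (z : Fin n → ℂ) :=
  Localization (Sz b z)

lemma fpoly_mem {n k : ℕ} (b : Fin n → Fin k → ℂ) (z : Fin n → ℂ) (i : Fin n) :
    fpoly b z i ∈ Sz b z :=
  Submonoid.subset_closure ⟨i, rfl⟩

/-- `∂Φ/∂t_m = ∑_i a_i b_i^m / f_i(t,z)` as an element of `R_z`. -/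
def dPhi {n k : ℕ} (a : Fin n → ℂ) (b : Fin n → Fin k → ℂ) (z : Fin n → ℂ)
    (m : Fin k) : Rz b z :=
  ∑ i, Localization.mk (C (a i * b i m)) ⟨fpoly b z i, fpoly_mem b z i⟩

/-- The ideal `I_z ⊆ R_z` generated by the `∂Φ/∂t_m`, `m = 1,…,k`. -/
def Iz {n k : ℕ} (a : Fin n → ℂ) (b : Fin n → Fin k → ℂ) (z : Fin n → ℂ) :
    Ideal (Rz b z) :=
  Ideal.span (Set.range (dPhi a b z))

/-- The algebra `A_z = R_z / I_z`. -/
abbrev Az {n k : ℕ} (a : Fin n → ℂ) (b : Fin n → Fin k → ℂ) (z : Fin n → ℂ) :=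
  Rz b z ⧸ Iz a b z

/-- `p_j(z) = [a_j / f_j(t,z)] ∈ A_z`. -/
def pz {n k : ℕ} (a : Fin n → ℂ) (b : Fin n → Fin k → ℂ) (z : Fin n → ℂ)
    (j : Fin n) : Az a b z :=
  Ideal.Quotient.mk _ (Localization.mk (C (a j)) ⟨fpoly b z j, fpoly_mem b z j⟩)

/-- The canonical map `ℂ → A_z` (scalars). -/
def cA {n k : ℕ} (a : Fin n → ℂ) (b : Fin n → Fin k → ℂ) (z : Fin n → ℂ)
    (c : ℂ) : Az a b z :=
  @algebraMap ℂ (Az a b z) _ _ (Ideal.instAlgebraQuotient ℂ (Iz a b z)) c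

/-- `w_{i_1,…,i_k} = d_{i_1,…,i_k} p_{i_1}(z) ⋯ p_{i_k}(z) ∈ A_z`. -/
def wz {n k : ℕ} (a : Fin n → ℂ) (b : Fin n → Fin k → ℂ) (z : Fin n → ℂ)
    (l : Fin k → Fin n) : Az a b z :=
  cA a b z (dd b l) * ∏ m, pz a b z (l m)

/-- The image of a polynomial in the field of rational functions `ℂ(t_1,…,t_k)`. -/
def toF {k : ℕ} (q : MvPolynomial (Fin k) ℂ) : FractionRing (MvPolynomial (Fin k) ℂ) :=
  algebraMap _ _ q

/-!
Expanding `d_{j,i_2,…,i_k}` along its first column (the one indexed by `j`) writes it as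
`∑_m (-1)^{m+1} M_m b_j^m`. Multiplying by `a_j / f_j` and summing over `j` therefore gives
`∑_m (-1)^{m+1} M_m ∂Φ/∂t_m`; this is an identity in any commutative ring receiving `ℂ` and
containing the elements `1 / f_j`. In `ℂ(t)` it is the first claim, and in `R_z` it exhibits
`∑_j d_{j,i_2,…,i_k} a_j / f_j` as an element of `I_z`, which is the second.
-/

section Laplace

variable {n k : ℕ} (b : Fin n → Fin (k + 1) → ℂ) (I : Fin k → Fin n)

def signedMinor (m : Fin (k + 1)) : ℂ :=
  (-1) ^ (m : ℕ) * Matrix.det (Matrix.of fun r c : Fin k => b (I r) (m.succAbove c))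

theorem dd_cons_eq_sum_signedMinor_mul (j : Fin n) :
    dd b (Fin.cons j I) = ∑ m, signedMinor b I m * b j m := by
  rw [dd, ← Matrix.det_transpose, Matrix.det_succ_row_zero]
  refine Finset.sum_congr rfl fun m _ => ?_
  simp only [signedMinor, Matrix.transpose_apply, Matrix.of_apply, Fin.cons_zero]
  rw [mul_right_comm]
  rfl

theorem sum_map_dd_cons_mul {A : Type*} [CommRing A] (g : ℂ →+* A) (a : Fin n → ℂ)
    (v : Fin n → A) :
    ∑ j, g (dd b (Fin.cons j I) * a j) * v j
      = ∑ m, g (signedMinor b I m) * ∑ i, g (a i * b i m) * v i := by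
  simp_rw [dd_cons_eq_sum_signedMinor_mul, Finset.sum_mul, map_sum, Finset.sum_mul,
    Finset.mul_sum]
  rw [Finset.sum_comm]
  refine Finset.sum_congr rfl fun m _ => Finset.sum_congr rfl fun j _ => ?_
  simp only [map_mul]
  ring

end Laplace

section Localization

variable {n k : ℕ} (a : Fin n → ℂ) (b : Fin n → Fin k → ℂ) (z : Fin n → ℂ)

theorem mk_C_eq_algebraMap_mul (x : ℂ) (i : Fin n) :
    (Localization.mk (C x) ⟨fpoly b z i, fpoly_mem b z i⟩ : Rz b z)
      = algebraMap ℂ (Rz b z) x * Localization.mk 1 ⟨fpoly b z i, fpoly_mem b z i⟩ := by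
  rw [IsScalarTower.algebraMap_apply ℂ (MvPolynomial (Fin k) ℂ) (Rz b z),
    ← Localization.mk_one_eq_algebraMap, Localization.mk_mul, one_mul, mul_one]
  rfl

theorem dPhi_eq_sum (m : Fin k) :
    dPhi a b z m = ∑ i, algebraMap ℂ (Rz b z) (a i * b i m) *
      Localization.mk 1 ⟨fpoly b z i, fpoly_mem b z i⟩ :=
  Finset.sum_congr rfl fun i _ => mk_C_eq_algebraMap_mul b z _ i

theorem cA_mul_pz (c : ℂ) (j : Fin n) :
    cA a b z c * pz a b z j = Ideal.Quotient.mk (Iz a b z)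
      (algebraMap ℂ (Rz b z) (c * a j) * Localization.mk 1 ⟨fpoly b z j, fpoly_mem b z j⟩) := by
  rw [cA, pz, mk_C_eq_algebraMap_mul, IsScalarTower.algebraMap_apply ℂ (Rz b z) (Az a b z),
    Ideal.Quotient.algebraMap_eq, ← map_mul, map_mul (algebraMap ℂ (Rz b z)), mul_assoc]

end Localization

theorem stmt6_general (n k' : ℕ) (b : Fin n → Fin (k' + 1) → ℂ) (a : Fin n → ℂ) (z : Fin n → ℂ)
    (I : Fin k' → Fin n) :
    (∑ j : Fin n, toF (C (dd b (Fin.cons j I) * a j)) / toF (fpoly b z j)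
      = ∑ m : Fin (k' + 1),
          toF (C ((-1) ^ (m : ℕ) *
            Matrix.det (Matrix.of fun r c : Fin k' => b (I r) (m.succAbove c)))) *
          ∑ i : Fin n, toF (C (a i * b i m)) / toF (fpoly b z i)) ∧
    ∑ j : Fin n, cA a b z (dd b (Fin.cons j I)) * pz a b z j = 0 := by
  constructor
  · simp_rw [div_eq_mul_inv]
    exact sum_map_dd_cons_mul b I ((algebraMap _ _).comp C) a fun j => (toF (fpoly b z j))⁻¹
  · simp_rw [cA_mul_pz, ← map_sum, Ideal.Quotient.eq_zero_iff_mem,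
      sum_map_dd_cons_mul b I (algebraMap ℂ (Rz b z)) a]
    refine Ideal.sum_mem _ fun m _ => Ideal.mul_mem_left _ _ ?_
    rw [← dPhi_eq_sum]
    exact Ideal.subset_span ⟨m, rfl⟩

/-- Fix `n > k ≥ 1` (here `k = k' + 1`), numbers `b_i^j` with all determinants
`d_{i_1,…,i_k}` (distinct indices) nonzero, weights `a_i ∈ ℂ^×` with `|a| = ∑ a_i ≠ 0`, and
`z ∈ ℂⁿ − Δ`.  Then for any distinct indices `i_2,…,i_k` (the tuple `I`), in the field of
rational functions `ℂ(t_1,…,t_k)` the identity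
`∑_j d_{j,i_2,…,i_k} a_j/f_j = ∑_m (-1)^{m+1} M_m (∑_i a_i b_i^m / f_i)` holds, where `M_m` is
the `(k-1)×(k-1)` minor of the rows `i_2,…,i_k` of `b` with the `m`-th column deleted; and
consequently `∑_j d_{j,i_2,…,i_k} p_j(z) = 0` in the algebra `A_z`. -/
theorem stmt6 (n k' : ℕ) (hnk : k' + 1 < n) (b : Fin n → Fin (k' + 1) → ℂ)
    (hd : ∀ l : Fin (k' + 1) → Fin n, Function.Injective l → dd b l ≠ 0)
    (a : Fin n → ℂ) (ha : ∀ i, a i ≠ 0) (hsum : ∑ i, a i ≠ 0)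
    (z : Fin n → ℂ) (hz : z ∉ discr b)
    (I : Fin k' → Fin n) (hI : Function.Injective I) :
    (∑ j : Fin n, toF (C (dd b (Fin.cons j I) * a j)) / toF (fpoly b z j)
      = ∑ m : Fin (k' + 1),
          toF (C ((-1) ^ (m : ℕ) *
            Matrix.det (Matrix.of fun r c : Fin k' => b (I r) (m.succAbove c)))) *
          ∑ i : Fin n, toF (C (a i * b i m)) / toF (fpoly b z i)) ∧
    ∑ j : Fin n, cA a b z (dd b (Fin.cons j I)) * pz a b z j = 0 :=
  stmt6_general n k' b a z I
end
end

section
/- For any distinct indices i_1,...,i_k ∈ {1,...,n} and any distinct indices j_1,...,j_k ∈ {1,...,n} such that the sets {i_1,...,i_k} and {j_1,...,j_k} have fewer than k−1 common elements, the mixed partial derivative ∂^{2k}Q/(∂z_{i_1}⋯∂z_{i_k}∂z_{j_1}⋯∂z_{j_k}) vanishes identically on ℂ^n. -/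
noncomputable section

/-- The polynomial function
`Q(z) = (1/|a|^{2k+1}) ∑_{1 ≤ i_1 < … < i_{k+1} ≤ n}
  (∏_{m=1}^{k+1} a_{i_m}/d_{i_1,…,î_m,…,i_{k+1}}²) f_{i_1,…,i_{k+1}}(z)^{2k}` on `ℂⁿ`,
the sum being over increasing enumerations of the `(k+1)`-element subsets of `{1,…,n}`. -/
def Qfun {n k : ℕ} (a : Fin n → ℂ) (b : Fin n → Fin k → ℂ) (z : Fin n → ℂ) : ℂ :=
  ((∑ i, a i) ^ (2 * k + 1))⁻¹ *
    ∑ s : {s : Finset (Fin n) // s.card = k + 1},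
      (∏ m : Fin (k + 1),
        a (s.1.orderEmbOfFin s.2 m) / (dd b (⇑(s.1.orderEmbOfFin s.2) ∘ m.succAbove)) ^ 2) *
      (fF b z ⇑(s.1.orderEmbOfFin s.2)) ^ (2 * k)

/-- The iterated partial derivative `∂^{|L|} g / (∏_{i ∈ L} ∂z_i)` of a function `g : ℂⁿ → ℂ`. -/
def iterD {n : ℕ} (L : List (Fin n)) (g : (Fin n → ℂ) → ℂ) : (Fin n → ℂ) → ℂ :=
  L.foldr (fun i h => fun z => fderiv ℂ h z (Pi.single i 1)) g
/-!
Each summand of `Q` is a power of the linear form `f_{i_1,…,i_{k+1}}`, which involves only the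
`k + 1` variables `z_{i_1}, …, z_{i_{k+1}}`. A function invariant under translation along `e_i`
keeps this property under every partial derivative, and `∂/∂z_i` kills it. The `2k`
differentiation indices cover `2k - |I ∩ J| > k + 1` distinct variables, so every summand is
differentiated in some variable it does not involve.
-/

open Finset
open scoped ContDiff

section TranslationInvariant

variable {𝕜 E F : Type*} [NontriviallyNormedField 𝕜] [NormedAddCommGroup E] [NormedSpace 𝕜 E]
  [NormedAddCommGroup F] [NormedSpace 𝕜 F] {g : E → F} {v : E}

theorem fderiv_apply_eq_zero_of_forall_add_smul_eq (hg : ∀ z (t : 𝕜), g (z + t • v) = g z)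
    (z : E) : fderiv 𝕜 g z v = 0 := by
  by_cases hd : DifferentiableAt 𝕜 g z
  · rw [← hd.lineDeriv_eq_fderiv, lineDeriv]
    simp only [hg, deriv_const]
  · rw [fderiv_zero_of_not_differentiableAt hd, zero_apply]

theorem fderiv_add_smul_eq_of_forall_add_smul_eq (hg : ∀ z (t : 𝕜), g (z + t • v) = g z)
    (z : E) (t : 𝕜) : fderiv 𝕜 g (z + t • v) = fderiv 𝕜 g z := by
  rw [← fderiv_comp_add_right]
  simp only [hg]

end TranslationInvariant

section IteratedPartialDerivative

variable {n : ℕ}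

theorem iterD_add_smul_single_eq {g : (Fin n → ℂ) → ℂ} {i : Fin n}
    (hg : ∀ z (t : ℂ), g (z + t • Pi.single i 1) = g z) (L : List (Fin n)) (z : Fin n → ℂ)
    (t : ℂ) : iterD L g (z + t • Pi.single i 1) = iterD L g z := by
  induction L generalizing z t with
  | nil => exact hg z t
  | cons j L ih =>
    show fderiv ℂ (iterD L g) _ _ = fderiv ℂ (iterD L g) _ _
    rw [fderiv_add_smul_eq_of_forall_add_smul_eq (fun z t => ih z t)]

theorem iterD_eq_zero_of_mem {g : (Fin n → ℂ) → ℂ} {i : Fin n}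
    (hg : ∀ z (t : ℂ), g (z + t • Pi.single i 1) = g z) {L : List (Fin n)} (hi : i ∈ L) :
    iterD L g = 0 := by
  induction L with
  | nil => cases hi
  | cons j L ih =>
    funext z
    show fderiv ℂ (iterD L g) z (Pi.single j 1) = 0
    rcases List.mem_cons.mp hi with rfl | hi
    · exact fderiv_apply_eq_zero_of_forall_add_smul_eq (iterD_add_smul_single_eq hg L) z
    · simp [ih hi]

theorem contDiff_iterD {g : (Fin n → ℂ) → ℂ} (hg : ContDiff ℂ ∞ g) (L : List (Fin n)) :
    ContDiff ℂ ∞ (iterD L g) := by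
  induction L with
  | nil => exact hg
  | cons i L ih => exact (ih.fderiv_right le_rfl).clm_apply contDiff_const

theorem iterD_sum {S : Type*} (s : Finset S) {g : S → (Fin n → ℂ) → ℂ}
    (hg : ∀ x ∈ s, ContDiff ℂ ∞ (g x)) (L : List (Fin n)) :
    iterD L (fun z => ∑ x ∈ s, g x z) = fun z => ∑ x ∈ s, iterD L (g x) z := by
  induction L with
  | nil => rfl
  | cons i L ih =>
    funext z
    show fderiv ℂ (iterD L _) z _ = _
    rw [ih, fderiv_fun_sum fun x hx => ((contDiff_iterD (hg x hx) L).differentiable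
      (by simp)).differentiableAt]
    simp only [_root_.sum_apply]
    rfl

end IteratedPartialDerivative

theorem contDiff_fF {n k : ℕ} (b : Fin n → Fin k → ℂ) (I : Fin (k + 1) → Fin n) :
    ContDiff ℂ ∞ (fun z => fF b z I) := by
  unfold fF
  fun_prop

theorem fF_add_smul_single {n k : ℕ} (b : Fin n → Fin k → ℂ) (z : Fin n → ℂ)
    {I : Fin (k + 1) → Fin n} {i : Fin n} (hi : ∀ l, I l ≠ i) (t : ℂ) :
    fF b (z + t • Pi.single i 1) I = fF b z I := by
  simp [fF, Pi.single_eq_of_ne (hi _)]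

theorem card_add_one_lt_card_image_union {n k : ℕ} {I J : Fin k → Fin n}
    (hI : Function.Injective I) (hJ : Function.Injective J)
    (hinter : (image I univ ∩ image J univ).card < k - 1) :
    k + 1 < (image I univ ∪ image J univ).card := by
  have := card_union_add_card_inter (image I univ) (image J univ)
  rw [card_image_of_injective _ hI, card_image_of_injective _ hJ, card_univ, Fintype.card_fin]
    at this
  omega

theorem stmt12_general (n k : ℕ) (b : Fin n → Fin k → ℂ) (a : Fin n → ℂ)
    (I J : Fin k → Fin n) (hI : Function.Injective I) (hJ : Function.Injective J)
    (hinter : (Finset.image I Finset.univ ∩ Finset.image J Finset.univ).card < k - 1) :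
    ∀ z : Fin n → ℂ, iterD (List.ofFn I ++ List.ofFn J) (Qfun a b) z = 0 := by
  intro z
  have hQ : Qfun a b = fun z => ∑ s : {s : Finset (Fin n) // s.card = k + 1},
      ((∑ i, a i) ^ (2 * k + 1))⁻¹ * (∏ m : Fin (k + 1),
        a (s.1.orderEmbOfFin s.2 m) / (dd b (⇑(s.1.orderEmbOfFin s.2) ∘ m.succAbove)) ^ 2) *
      (fF b z ⇑(s.1.orderEmbOfFin s.2)) ^ (2 * k) := by
    funext z
    simp only [Qfun, mul_sum, mul_assoc]
  rw [hQ, iterD_sum _ fun s _ => contDiff_const.mul ((contDiff_fF b _).pow _)]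
  refine sum_eq_zero fun s _ => ?_
  obtain ⟨i, hiIJ, his⟩ : ∃ i ∈ image I univ ∪ image J univ, i ∉ s.1 :=
    not_subset.mp fun hsub => by
      have := card_le_card hsub
      have := card_add_one_lt_card_image_union hI hJ hinter
      omega
  have hiL : i ∈ List.ofFn I ++ List.ofFn J := by
    simpa [List.mem_ofFn, eq_comm] using hiIJ
  have his' : ∀ l, s.1.orderEmbOfFin s.2 l ≠ i := fun l hl =>
    his (hl ▸ s.1.orderEmbOfFin_mem s.2 l)
  rw [iterD_eq_zero_of_mem (fun z t => by rw [fF_add_smul_single b z his']) hiL, Pi.zero_apply]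

/-- Fix `n > k ≥ 1`, numbers `b_i^j` with all determinants `d_{i_1,…,i_k}` (distinct indices)
nonzero and weights `a_i ∈ ℂ^×` with `|a| = ∑ a_i ≠ 0`.  Then for any distinct indices
`i_1,…,i_k` and distinct indices `j_1,…,j_k` such that the sets `{i_1,…,i_k}` and
`{j_1,…,j_k}` have fewer than `k − 1` common elements, the mixed partial derivative
`∂^{2k} Q / (∂z_{i_1} ⋯ ∂z_{i_k} ∂z_{j_1} ⋯ ∂z_{j_k})` vanishes identically on `ℂⁿ`. -/
theorem stmt12 (n k : ℕ) (hk : 1 ≤ k) (hnk : k < n) (b : Fin n → Fin k → ℂ)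
    (hd : ∀ l : Fin k → Fin n, Function.Injective l → dd b l ≠ 0)
    (a : Fin n → ℂ) (ha : ∀ i, a i ≠ 0) (hsum : ∑ i, a i ≠ 0)
    (I J : Fin k → Fin n) (hI : Function.Injective I) (hJ : Function.Injective J)
    (hinter : (Finset.image I Finset.univ ∩ Finset.image J Finset.univ).card < k - 1) :
    ∀ z : Fin n → ℂ, iterD (List.ofFn I ++ List.ofFn J) (Qfun a b) z = 0 :=
  stmt12_general n k b a I J hI hJ hinter
end
end
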